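/- Assume D = 0, the system is externally symmetric with signature Σ, every entry of ∫_0^∞ |C·exp(At)·B| dt is finite with ‖G‖_pk = ‖∫_0^∞ |C·exp(At)·B| dt‖_∞, and the small-gain condition ‖Q‖_∞ · ‖G‖²_pk · ‖R⁻¹‖_∞ < 1 holds. Let u* ∈ L^m_∞(0,t_f) satisfy u* = 𝒯(u*), fix α ∈ (0,1], and define the iterates u_{k+1} = (1−α)u_k + α𝒯(u_k) from u_0 ∈ L^m_∞(0,t_f). Then for every k ∈ ℕ, ‖u_k − u*‖_{∞,t_f} ≤ (1 − α + α·‖R⁻¹‖_∞·‖G‖²_pk·‖Q‖_∞)^k · ‖u_0 − u*‖_{∞,t_f}; in particular lim_{k→∞} ‖u_k − u*‖_{∞,t_f} = 0. -/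

import Mathlib

open MeasureTheory Matrix Filter
open scoped ENNReal

/-- Matrix exponential `exp(tA)`. -/
noncomputable def mexp {n : ℕ} (A : Matrix (Fin n) (Fin n) ℝ) (t : ℝ) :
    Matrix (Fin n) (Fin n) ℝ := NormedSpace.exp (t • A)

/-- The system operator `(𝒢u)(t) = ∫_0^t C e^{A(t-τ)} B u(τ) dτ + D u(t)`. -/
noncomputable def Gop {n m : ℕ} (A : Matrix (Fin n) (Fin n) ℝ)
    (B : Matrix (Fin n) (Fin m) ℝ) (C : Matrix (Fin m) (Fin n) ℝ)
    (D : Matrix (Fin m) (Fin m) ℝ) (u : ℝ → Fin m → ℝ) (t : ℝ) : Fin m → ℝ :=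
  (∫ τ in (0:ℝ)..t, (C * mexp A (t - τ) * B).mulVec (u τ)) + D.mulVec (u t)

/-- Natural response `d_{x0}(t) = C e^{At} x0`. -/
noncomputable def natResp {n m : ℕ} (A : Matrix (Fin n) (Fin n) ℝ)
    (C : Matrix (Fin m) (Fin n) ℝ) (x0 : Fin n → ℝ) (t : ℝ) : Fin m → ℝ :=
  (C * mexp A t).mulVec x0

/-- Inner product on L²(0,t_f;ℝ^m). -/
noncomputable def l2ip {m : ℕ} (tf : ℝ) (u v : ℝ → Fin m → ℝ) : ℝ :=
  ∫ t in Set.Ioc 0 tf, u t ⬝ᵥ v t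

/-- Norm on L²(0,t_f;ℝ^m). -/
noncomputable def l2norm {m : ℕ} (tf : ℝ) (u : ℝ → Fin m → ℝ) : ℝ :=
  Real.sqrt (l2ip tf u u)

/-- Membership in L²(0,t_f;ℝ^m). -/
def MemL2 {m : ℕ} (tf : ℝ) (u : ℝ → Fin m → ℝ) : Prop :=
  AEStronglyMeasurable u (volume.restrict (Set.Ioc 0 tf)) ∧
    IntegrableOn (fun t => u t ⬝ᵥ u t) (Set.Ioc 0 tf)

/-- Membership in L^m_∞(0,t_f). -/
def MemLinf {m : ℕ} (tf : ℝ) (u : ℝ → Fin m → ℝ) : Prop :=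
  AEStronglyMeasurable u (volume.restrict (Set.Ioc 0 tf)) ∧
    eLpNorm u ⊤ (volume.restrict (Set.Ioc 0 tf)) < ⊤

/-- A signature matrix: diagonal with ±1 entries. -/
def IsSignature {m : ℕ} (S : Matrix (Fin m) (Fin m) ℝ) : Prop :=
  ∃ d : Fin m → ℝ, (∀ i, d i = 1 ∨ d i = -1) ∧ S = Matrix.diagonal d

/-- External symmetry with signature `Sg`. -/
def ExtSym {n m : ℕ} (A : Matrix (Fin n) (Fin n) ℝ) (B : Matrix (Fin n) (Fin m) ℝ)
    (C : Matrix (Fin m) (Fin n) ℝ) (D : Matrix (Fin m) (Fin m) ℝ)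
    (Sg : Matrix (Fin m) (Fin m) ℝ) : Prop :=
  (∀ t : ℝ, 0 ≤ t → Sg * (C * mexp A t * B)ᵀ = (C * mexp A t * B) * Sg) ∧
    Sg * Dᵀ = D * Sg

/-- Spectral norm of a square matrix. -/
noncomputable def spec {m : ℕ} (M : Matrix (Fin m) (Fin m) ℝ) : ℝ :=
  ‖Matrix.toEuclideanCLM (𝕜 := ℝ) M‖

/-- Maximum absolute row sum norm of a square matrix. -/
noncomputable def rowSumNorm {m : ℕ} (M : Matrix (Fin m) (Fin m) ℝ) : ℝ :=
  ⨆ i, ∑ j, |M i j|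

/-- The operator `𝒯(u) = -R⁻¹ Σ J𝒢(Σ Q (J(𝒢u + d_{x0})))`. -/
noncomputable def TOp {n m : ℕ} (A : Matrix (Fin n) (Fin n) ℝ) (B : Matrix (Fin n) (Fin m) ℝ)
    (C : Matrix (Fin m) (Fin n) ℝ) (D : Matrix (Fin m) (Fin m) ℝ)
    (Sg Q R : Matrix (Fin m) (Fin m) ℝ) (x0 : Fin n → ℝ) (tf : ℝ)
    (u : ℝ → Fin m → ℝ) (t : ℝ) : Fin m → ℝ :=
  -(R⁻¹.mulVec (Sg.mulVec (Gop A B C D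
      (fun s => Sg.mulVec (Q.mulVec (Gop A B C D u (tf - s) + natResp A C x0 (tf - s))))
      (tf - t))))

/-- The operator `𝒮(u) = -R⁻¹ Σ J𝒢(Σ Q (J𝒢u))`. -/
noncomputable def SOp {n m : ℕ} (A : Matrix (Fin n) (Fin n) ℝ) (B : Matrix (Fin n) (Fin m) ℝ)
    (C : Matrix (Fin m) (Fin n) ℝ) (D : Matrix (Fin m) (Fin m) ℝ)
    (Sg Q R : Matrix (Fin m) (Fin m) ℝ) (tf : ℝ)
    (u : ℝ → Fin m → ℝ) (t : ℝ) : Fin m → ℝ :=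
  -(R⁻¹.mulVec (Sg.mulVec (Gop A B C D
      (fun s => Sg.mulVec (Q.mulVec (Gop A B C D u (tf - s)))) (tf - t))))

/-- The quadratic cost `J(x0,u)`. -/
noncomputable def Jcost {n m : ℕ} (A : Matrix (Fin n) (Fin n) ℝ) (B : Matrix (Fin n) (Fin m) ℝ)
    (C : Matrix (Fin m) (Fin n) ℝ) (D : Matrix (Fin m) (Fin m) ℝ)
    (Q R : Matrix (Fin m) (Fin m) ℝ) (x0 : Fin n → ℝ) (tf : ℝ)
    (u : ℝ → Fin m → ℝ) : ℝ :=
  (1/2) * ∫ t in Set.Ioc 0 tf,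
    ((Gop A B C D u t + natResp A C x0 t) ⬝ᵥ Q.mulVec (Gop A B C D u t + natResp A C x0 t)
      + u t ⬝ᵥ R.mulVec (u t))

/-- The peak-to-peak gain ‖G‖_pk = ‖∫_0^∞ |C e^{At} B| dt‖_∞. -/
noncomputable def pkGain {n m : ℕ} (A : Matrix (Fin n) (Fin n) ℝ)
    (B : Matrix (Fin n) (Fin m) ℝ) (C : Matrix (Fin m) (Fin n) ℝ) : ℝ :=
  rowSumNorm (Matrix.of fun i j => ∫ t in Set.Ioi (0:ℝ), |(C * mexp A t * B) i j|)

section Aux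
variable {n m : ℕ} {A : Matrix (Fin n) (Fin n) ℝ} {B : Matrix (Fin n) (Fin m) ℝ}
  {C : Matrix (Fin m) (Fin n) ℝ}

section
attribute [local instance] Matrix.linftyOpNormedRing Matrix.linftyOpNormedAlgebra
lemma mexp_cont : Continuous fun t : ℝ => mexp A t := by
  have h1 : Continuous fun t : ℝ => t • A := by continuity
  exact NormedSpace.exp_continuous.comp h1
end

lemma Mt_cont (i j : Fin m) : Continuous fun t : ℝ => (C * mexp A t * B) i j := by
  have h : Continuous fun t : ℝ => C * mexp A t * B :=
    (continuous_const.matrix_mul mexp_cont).matrix_mul continuous_const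
  exact (continuous_apply j).comp ((continuous_apply i).comp h)

lemma rowSumNorm_nonneg (N : Matrix (Fin m) (Fin m) ℝ) : 0 ≤ rowSumNorm N :=
  Real.iSup_nonneg fun _ => Finset.sum_nonneg fun _ _ => abs_nonneg _

lemma rowSum_le (N : Matrix (Fin m) (Fin m) ℝ) (i : Fin m) :
    ∑ j, |N i j| ≤ rowSumNorm N := by
  unfold rowSumNorm
  exact le_ciSup (Finite.bddAbove_range fun i => ∑ j, |N i j|) i

lemma mulVec_abs_le {N : Matrix (Fin m) (Fin m) ℝ} {b : Fin m → ℝ} {K : ℝ}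
    (hK : 0 ≤ K) (hb : ∀ j, |b j| ≤ K) (i : Fin m) :
    |N.mulVec b i| ≤ rowSumNorm N * K := by
  have h1 : |N.mulVec b i| ≤ (∑ j, |N i j|) * K := by
    calc |N.mulVec b i| = |∑ j, N i j * b j| := by simp [Matrix.mulVec, dotProduct]
    _ ≤ ∑ j, |N i j * b j| := Finset.abs_sum_le_sum_abs _ _
    _ ≤ ∑ j, |N i j| * K := by
        refine Finset.sum_le_sum fun j _ => ?_
        rw [abs_mul]; exact mul_le_mul_of_nonneg_left (hb j) (abs_nonneg _)
    _ = (∑ j, |N i j|) * K := by rw [Finset.sum_mul]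
  exact h1.trans (mul_le_mul_of_nonneg_right (rowSum_le N i) hK)

lemma mulVec_norm_le {N : Matrix (Fin m) (Fin m) ℝ} {b : Fin m → ℝ} {K : ℝ}
    (hK : 0 ≤ K) (hb : ‖b‖ ≤ K) : ‖N.mulVec b‖ ≤ rowSumNorm N * K := by
  rw [pi_norm_le_iff_of_nonneg (mul_nonneg (rowSumNorm_nonneg N) hK)]
  intro i
  rw [Real.norm_eq_abs]
  exact mulVec_abs_le hK (fun j => ((Real.norm_eq_abs _).symm.trans_le
    ((norm_le_pi_norm b j).trans hb))) i

lemma sig_mulVec_abs {Sg : Matrix (Fin m) (Fin m) ℝ} (hSg : IsSignature Sg)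
    (b : Fin m → ℝ) (i : Fin m) : |Sg.mulVec b i| = |b i| := by
  obtain ⟨d, hd, rfl⟩ := hSg
  rw [Matrix.mulVec_diagonal, abs_mul]
  rcases hd i with h | h <;> simp [h]

lemma sig_mulVec_norm_le {Sg : Matrix (Fin m) (Fin m) ℝ} (hSg : IsSignature Sg)
    {b : Fin m → ℝ} {K : ℝ} (hK : 0 ≤ K) (hb : ‖b‖ ≤ K) : ‖Sg.mulVec b‖ ≤ K := by
  rw [pi_norm_le_iff_of_nonneg hK]
  intro i
  rw [Real.norm_eq_abs, sig_mulVec_abs hSg]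
  exact ((Real.norm_eq_abs _).symm.trans_le ((norm_le_pi_norm b i).trans hb))

lemma exists_KM (tf : ℝ) (htf : 0 ≤ tf) : ∃ KM : ℝ, 0 ≤ KM ∧
    ∀ s ∈ Set.Icc 0 tf, ∀ i : Fin m, ∑ j, |(C * mexp A s * B) i j| ≤ KM := by
  have hc : Continuous fun s : ℝ => ∑ i : Fin m, ∑ j, |(C * mexp A s * B) i j| := by
    refine continuous_finset_sum _ fun i _ => continuous_finset_sum _ fun j _ => ?_
    exact (Mt_cont i j).abs
  obtain ⟨KM, hKM⟩ := (isCompact_Icc (a := (0:ℝ)) (b := tf)).exists_bound_of_continuousOn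
    hc.continuousOn
  refine ⟨KM, ?_, fun s hs i => ?_⟩
  · have := hKM 0 ⟨le_refl 0, htf⟩
    exact le_trans (norm_nonneg _) this
  · have h2 := hKM s hs
    rw [Real.norm_eq_abs] at h2
    refine le_trans ?_ ((le_abs_self _).trans h2)
    exact Finset.single_le_sum (f := fun i => ∑ j, |(C * mexp A s * B) i j|)
      (fun i _ => Finset.sum_nonneg fun j _ => abs_nonneg _) (Finset.mem_univ i)

end Aux

section Gop
variable {n m : ℕ} {A : Matrix (Fin n) (Fin n) ℝ} {B : Matrix (Fin n) (Fin m) ℝ}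
  {C : Matrix (Fin m) (Fin n) ℝ} {tf : ℝ}

lemma pkGain_nonneg : 0 ≤ pkGain A B C := rowSumNorm_nonneg _

lemma Gop_eval (w : ℝ → Fin m → ℝ) {T : ℝ} (hT : 0 ≤ T) :
    Gop A B C 0 w T = ∫ τ in Set.Ioc 0 T, (C * mexp A (T - τ) * B).mulVec (w τ) := by
  unfold Gop
  rw [Matrix.zero_mulVec, add_zero, intervalIntegral.integral_of_le hT]

lemma aesm_of_memrestrict {w : ℝ → Fin m → ℝ} {S S' : Set ℝ} (hS : S' ⊆ S)
    (hw : AEStronglyMeasurable w (volume.restrict S)) :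
    AEStronglyMeasurable w (volume.restrict S') :=
  hw.mono_measure (Measure.restrict_mono hS le_rfl)

lemma sm_mulVec {w' : ℝ → Fin m → ℝ} (hw' : StronglyMeasurable w') {e : ℝ → ℝ}
    (he : Continuous e) :
    StronglyMeasurable fun τ => (C * mexp A (e τ) * B).mulVec (w' τ) := by
  apply Measurable.stronglyMeasurable
  apply measurable_pi_iff.mpr
  intro i
  have heq : (fun τ => (C * mexp A (e τ) * B).mulVec (w' τ) i)
      = fun τ => ∑ j, (C * mexp A (e τ) * B) i j * w' τ j := by
    funext τ; simp [Matrix.mulVec, dotProduct]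
  rw [heq]
  exact Finset.measurable_sum _ fun j _ =>
    (((Mt_cont i j).comp he).measurable).mul
      ((measurable_pi_apply j).comp hw'.measurable)

lemma Gop_integrand_integrable {w : ℝ → Fin m → ℝ} {K T : ℝ} (hK : 0 ≤ K)
    (hw : AEStronglyMeasurable w (volume.restrict (Set.Ioc 0 tf)))
    (hbd : ∀ᵐ τ ∂(volume.restrict (Set.Ioc 0 tf)), ‖w τ‖ ≤ K)
    (hT : T ∈ Set.Icc 0 tf) :
    IntegrableOn (fun τ => (C * mexp A (T - τ) * B).mulVec (w τ)) (Set.Ioc 0 T) := by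
  obtain ⟨KM, hKM0, hKM⟩ := exists_KM (A := A) (B := B) (C := C) tf (hT.1.trans hT.2)
  have hsub : Set.Ioc (0:ℝ) T ⊆ Set.Ioc 0 tf := Set.Ioc_subset_Ioc_right hT.2
  have hwm : AEStronglyMeasurable w (volume.restrict (Set.Ioc 0 T)) :=
    aesm_of_memrestrict hsub hw
  have hbd' : ∀ᵐ τ ∂(volume.restrict (Set.Ioc 0 T)), ‖w τ‖ ≤ K :=
    hbd.filter_mono (ae_mono (Measure.restrict_mono hsub le_rfl))
  have haesm : AEStronglyMeasurable (fun τ => (C * mexp A (T - τ) * B).mulVec (w τ))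
      (volume.restrict (Set.Ioc 0 T)) := by
    refine ⟨fun τ => (C * mexp A (T - τ) * B).mulVec (hwm.mk w τ),
      sm_mulVec hwm.stronglyMeasurable_mk (continuous_const.sub continuous_id), ?_⟩
    exact hwm.ae_eq_mk.mono fun τ h => by simp only []; rw [h]
  refine Integrable.mono' (g := fun _ => KM * K) (integrableOn_const ?_) haesm ?_
  · exact measure_Ioc_lt_top.ne
  · filter_upwards [hbd', ae_restrict_mem measurableSet_Ioc] with τ h1 h2
    have hTτ : T - τ ∈ Set.Icc 0 tf := ⟨by linarith [h2.2], by linarith [h2.1, hT.2]⟩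
    calc ‖(C * mexp A (T - τ) * B).mulVec (w τ)‖
        ≤ rowSumNorm (C * mexp A (T - τ) * B) * K := mulVec_norm_le hK h1
      _ ≤ KM * K := by
          refine mul_le_mul_of_nonneg_right ?_ hK
          unfold rowSumNorm
          exact Real.iSup_le (fun i => hKM _ hTτ i) hKM0
end Gop

section Gop2
variable {n m : ℕ} {A : Matrix (Fin n) (Fin n) ℝ} {B : Matrix (Fin n) (Fin m) ℝ}
  {C : Matrix (Fin m) (Fin n) ℝ} {tf : ℝ}

lemma Gop_bound {w : ℝ → Fin m → ℝ} {K T : ℝ} (hK : 0 ≤ K)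
    (hfin : ∀ i j, IntegrableOn (fun t => |(C * mexp A t * B) i j|) (Set.Ioi 0))
    (hw : AEStronglyMeasurable w (volume.restrict (Set.Ioc 0 tf)))
    (hbd : ∀ᵐ τ ∂(volume.restrict (Set.Ioc 0 tf)), ‖w τ‖ ≤ K)
    (hT : T ∈ Set.Icc 0 tf) :
    ‖Gop A B C 0 w T‖ ≤ pkGain A B C * K := by
  have hint := Gop_integrand_integrable (A := A) (B := B) (C := C) hK hw hbd hT
  have hsub : Set.Ioc (0:ℝ) T ⊆ Set.Ioc 0 tf := Set.Ioc_subset_Ioc_right hT.2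
  have hbd' : ∀ᵐ τ ∂(volume.restrict (Set.Ioc 0 T)), ‖w τ‖ ≤ K :=
    hbd.filter_mono (ae_mono (Measure.restrict_mono hsub le_rfl))
  rw [Gop_eval w hT.1, pi_norm_le_iff_of_nonneg (mul_nonneg pkGain_nonneg hK)]
  intro i
  have happly : (∫ τ in Set.Ioc 0 T, (C * mexp A (T - τ) * B).mulVec (w τ)) i
      = ∫ τ in Set.Ioc 0 T, (C * mexp A (T - τ) * B).mulVec (w τ) i := by
    have := (ContinuousLinearMap.proj (R := ℝ) (φ := fun _ : Fin m => ℝ) i).integral_comp_comm hint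
    simpa using this.symm
  rw [Real.norm_eq_abs, happly]
  have step1 : |∫ τ in Set.Ioc 0 T, (C * mexp A (T - τ) * B).mulVec (w τ) i|
      ≤ ∫ τ in Set.Ioc 0 T, ‖(C * mexp A (T - τ) * B).mulVec (w τ) i‖ := by
    simpa [Real.norm_eq_abs] using norm_integral_le_integral_norm
      (fun τ => (C * mexp A (T - τ) * B).mulVec (w τ) i) (μ := volume.restrict (Set.Ioc 0 T))
  have hgint : IntegrableOn (fun τ => (∑ j, |(C * mexp A (T - τ) * B) i j|) * K)
      (Set.Ioc 0 T) := by
    refine Continuous.integrableOn_Ioc ?_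
    exact (continuous_finset_sum _ fun j _ =>
      ((Mt_cont i j).comp (continuous_const.sub continuous_id)).abs).mul continuous_const
  have step2 : ∫ τ in Set.Ioc 0 T, ‖(C * mexp A (T - τ) * B).mulVec (w τ) i‖
      ≤ ∫ τ in Set.Ioc 0 T, (∑ j, |(C * mexp A (T - τ) * B) i j|) * K := by
    refine integral_mono_of_nonneg (Eventually.of_forall fun τ => norm_nonneg _) hgint ?_
    filter_upwards [hbd'] with τ h1
    rw [Real.norm_eq_abs]
    calc |(C * mexp A (T - τ) * B).mulVec (w τ) i|
        = |∑ j, (C * mexp A (T - τ) * B) i j * w τ j| := by simp [Matrix.mulVec, dotProduct]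
      _ ≤ ∑ j, |(C * mexp A (T - τ) * B) i j * w τ j| := Finset.abs_sum_le_sum_abs _ _
      _ ≤ ∑ j, |(C * mexp A (T - τ) * B) i j| * K := by
          refine Finset.sum_le_sum fun j _ => ?_
          rw [abs_mul]
          refine mul_le_mul_of_nonneg_left ?_ (abs_nonneg _)
          exact ((Real.norm_eq_abs _).symm.trans_le ((norm_le_pi_norm (w τ) j).trans h1))
      _ = (∑ j, |(C * mexp A (T - τ) * B) i j|) * K := by rw [Finset.sum_mul]
  have step3 : ∫ τ in Set.Ioc 0 T, (∑ j, |(C * mexp A (T - τ) * B) i j|) * K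
      ≤ pkGain A B C * K := by
    have heq : ∫ τ in Set.Ioc 0 T, (∑ j, |(C * mexp A (T - τ) * B) i j|) * K
        = ∑ j, (∫ τ in Set.Ioc 0 T, |(C * mexp A (T - τ) * B) i j|) * K := by
      calc ∫ τ in Set.Ioc 0 T, (∑ j, |(C * mexp A (T - τ) * B) i j|) * K
          = ∫ τ in Set.Ioc 0 T, ∑ j, |(C * mexp A (T - τ) * B) i j| * K := by
            simp [Finset.sum_mul]
        _ = ∑ j, ∫ τ in Set.Ioc 0 T, |(C * mexp A (T - τ) * B) i j| * K :=
            integral_finset_sum _ fun j _ => (Continuous.integrableOn_Ioc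
              ((((Mt_cont i j).comp (continuous_const.sub continuous_id)).abs).mul
                continuous_const))
        _ = ∑ j, (∫ τ in Set.Ioc 0 T, |(C * mexp A (T - τ) * B) i j|) * K := by
            simp [integral_mul_const]
    rw [heq]
    refine le_trans ?_ (mul_le_mul_of_nonneg_right (rowSum_le
      (Matrix.of fun i j => ∫ t in Set.Ioi (0:ℝ), |(C * mexp A t * B) i j|) i) hK)
    rw [← Finset.sum_mul]
    refine mul_le_mul_of_nonneg_right (Finset.sum_le_sum fun j _ => ?_) hK
    have hsubst : ∫ τ in Set.Ioc 0 T, |(C * mexp A (T - τ) * B) i j|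
        = ∫ s in Set.Ioc 0 T, |(C * mexp A s * B) i j| := by
      rw [← intervalIntegral.integral_of_le hT.1, ← intervalIntegral.integral_of_le hT.1,
        intervalIntegral.integral_comp_sub_left (fun s => |(C * mexp A s * B) i j|) T]
      norm_num
    rw [hsubst, Matrix.of_apply]
    have hmono : ∫ s in Set.Ioc 0 T, |(C * mexp A s * B) i j|
        ≤ ∫ s in Set.Ioi 0, |(C * mexp A s * B) i j| := by
      refine setIntegral_mono_set (hfin i j)
        (Eventually.of_forall fun s => abs_nonneg _) ?_
      exact HasSubset.Subset.eventuallyLE Set.Ioc_subset_Ioi_self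
    refine hmono.trans_eq ?_
    rw [abs_of_nonneg]
    exact setIntegral_nonneg measurableSet_Ioi fun s _ => abs_nonneg _
  exact (step1.trans step2).trans step3

lemma Gop_sub {u v : ℝ → Fin m → ℝ} {Ku Kv T : ℝ} (hKu : 0 ≤ Ku) (hKv : 0 ≤ Kv)
    (hu : AEStronglyMeasurable u (volume.restrict (Set.Ioc 0 tf)))
    (hv : AEStronglyMeasurable v (volume.restrict (Set.Ioc 0 tf)))
    (hbu : ∀ᵐ τ ∂(volume.restrict (Set.Ioc 0 tf)), ‖u τ‖ ≤ Ku)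
    (hbv : ∀ᵐ τ ∂(volume.restrict (Set.Ioc 0 tf)), ‖v τ‖ ≤ Kv)
    (hT : T ∈ Set.Icc 0 tf) :
    Gop A B C 0 u T - Gop A B C 0 v T = Gop A B C 0 (fun τ => u τ - v τ) T := by
  rw [Gop_eval u hT.1, Gop_eval v hT.1, Gop_eval _ hT.1]
  rw [← integral_sub (Gop_integrand_integrable hKu hu hbu hT)
    (Gop_integrand_integrable hKv hv hbv hT)]
  congr 1
  funext τ
  rw [Matrix.mulVec_sub]

lemma Gop_congr {u v : ℝ → Fin m → ℝ} {T : ℝ} (hT : 0 ≤ T)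
    (h : ∀ τ ∈ Set.Ioc 0 T, u τ = v τ) :
    Gop A B C 0 u T = Gop A B C 0 v T := by
  rw [Gop_eval u hT, Gop_eval v hT]
  refine setIntegral_congr_fun measurableSet_Ioc fun τ hτ => ?_
  rw [h τ hτ]
end Gop2

section Meas
variable {n m : ℕ} {A : Matrix (Fin n) (Fin n) ℝ} {B : Matrix (Fin n) (Fin m) ℝ}
  {C : Matrix (Fin m) (Fin n) ℝ} {tf : ℝ}

lemma Gop_reflected_aesm (htf : 0 < tf) {w : ℝ → Fin m → ℝ}
    (hw : AEStronglyMeasurable w (volume.restrict (Set.Ioc 0 tf))) :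
    AEStronglyMeasurable (fun t => Gop A B C 0 w (tf - t))
      (volume.restrict (Set.Ioc 0 tf)) := by
  set μ' := volume.restrict (Set.Ioc (0:ℝ) tf) with hμ'
  set S : Set (ℝ × ℝ) := {p : ℝ × ℝ | 0 < p.2 ∧ p.2 ≤ tf - p.1} with hS
  have hSmeas : MeasurableSet S := by
    have h1 : MeasurableSet {p : ℝ × ℝ | 0 < p.2} :=
      measurableSet_lt measurable_const measurable_snd
    have h2 : MeasurableSet {p : ℝ × ℝ | p.2 ≤ tf - p.1} :=
      measurableSet_le measurable_snd (measurable_const.sub measurable_fst)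
    exact h1.inter h2
  set F : ℝ × ℝ → Fin m → ℝ :=
    S.indicator (fun p => (C * mexp A (tf - p.1 - p.2) * B).mulVec (w p.2)) with hF
  have hFaesm : AEStronglyMeasurable F (μ'.prod μ') := by
    set w' := hw.mk w with hw'
    refine ⟨S.indicator (fun p => (C * mexp A (tf - p.1 - p.2) * B).mulVec (w' p.2)), ?_, ?_⟩
    · refine StronglyMeasurable.indicator ?_ hSmeas
      apply Measurable.stronglyMeasurable
      apply measurable_pi_iff.mpr
      intro i
      have heq : (fun p : ℝ × ℝ => (C * mexp A (tf - p.1 - p.2) * B).mulVec (w' p.2) i)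
          = fun p : ℝ × ℝ => ∑ j, (C * mexp A (tf - p.1 - p.2) * B) i j * w' p.2 j := by
        funext p; simp [Matrix.mulVec, dotProduct]
      rw [heq]
      refine Finset.measurable_sum _ fun j _ => Measurable.mul ?_ ?_
      · exact ((Mt_cont i j).comp
          ((continuous_const.sub continuous_fst).sub continuous_snd)).measurable
      · exact (measurable_pi_apply j).comp
          (hw.stronglyMeasurable_mk.measurable.comp measurable_snd)
    · obtain ⟨N, hNsub, hNmeas, hN0⟩ :=
        exists_measurable_superset_of_null (ae_iff.mp hw.ae_eq_mk)
      have hnull : (μ'.prod μ') (Set.univ ×ˢ N) = 0 := by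
        rw [Measure.prod_prod, hN0, mul_zero]
      rw [Filter.EventuallyEq, ae_iff]
      refine measure_mono_null ?_ hnull
      intro p hp
      simp only [Set.mem_setOf_eq] at hp
      rw [Set.mem_prod]
      refine ⟨Set.mem_univ _, hNsub ?_⟩
      simp only [Set.mem_setOf_eq, Set.mem_compl_iff]
      intro hcontra
      apply hp
      by_cases hmem : p ∈ S
      · rw [hF, Set.indicator_of_mem hmem, Set.indicator_of_mem hmem, hcontra]
      · rw [hF, Set.indicator_of_notMem hmem, Set.indicator_of_notMem hmem]
  have hG : AEStronglyMeasurable (fun t => ∫ τ, F (t, τ) ∂μ') μ' :=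
    hFaesm.integral_prod_right'
  refine hG.congr ?_
  filter_upwards [ae_restrict_mem measurableSet_Ioc] with t ht
  have htle : tf - t ≤ tf := by linarith [ht.1]
  have htnn : 0 ≤ tf - t := by linarith [ht.2]
  have hind : (fun τ => F (t, τ))
      = Set.indicator (Set.Ioc 0 (tf - t))
          (fun τ => (C * mexp A (tf - t - τ) * B).mulVec (w τ)) := by
    funext τ
    by_cases hmem : τ ∈ Set.Ioc 0 (tf - t)
    · have : (t, τ) ∈ S := ⟨hmem.1, hmem.2⟩
      rw [hF, Set.indicator_of_mem this, Set.indicator_of_mem hmem]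
    · have : (t, τ) ∉ S := by
        intro hc; exact hmem ⟨hc.1, hc.2⟩
      rw [hF, Set.indicator_of_notMem this, Set.indicator_of_notMem hmem]
  rw [hind, integral_indicator measurableSet_Ioc]
  rw [hμ', Measure.restrict_restrict measurableSet_Ioc,
    Set.inter_eq_left.mpr (Set.Ioc_subset_Ioc_right htle)]
  rw [Gop_eval w htnn]
end Meas

section Helpers
variable {n m : ℕ} {A : Matrix (Fin n) (Fin n) ℝ} {B : Matrix (Fin n) (Fin m) ℝ}
  {C : Matrix (Fin m) (Fin n) ℝ} {tf : ℝ} {μ : MeasureTheory.Measure ℝ}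

lemma aesm_mulVec {N : Matrix (Fin m) (Fin m) ℝ} {f : ℝ → Fin m → ℝ}
    (hf : AEStronglyMeasurable f μ) :
    AEStronglyMeasurable (fun x => N.mulVec (f x)) μ := by
  have hc : Continuous fun b : Fin m → ℝ => N.mulVec b := by
    have := (Matrix.mulVecLin N).continuous_of_finiteDimensional
    exact this
  exact hc.comp_aestronglyMeasurable hf

lemma natResp_reflected_cont {x0 : Fin n → ℝ} :
    Continuous fun t : ℝ => natResp A C x0 (tf - t) := by
  have h : Continuous fun t : ℝ => C * mexp A (tf - t) :=
    continuous_const.matrix_mul ((mexp_cont (A := A)).comp (f := fun t => tf - t) (continuous_const.sub continuous_id))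
  unfold natResp
  apply continuous_pi
  intro i
  have heq : (fun t : ℝ => (C * mexp A (tf - t)).mulVec x0 i)
      = fun t : ℝ => ∑ k, (C * mexp A (tf - t)) i k * x0 k := by
    funext t; simp [Matrix.mulVec, dotProduct]
  rw [heq]
  exact continuous_finset_sum _ fun k _ =>
    (((continuous_apply k).comp ((continuous_apply i).comp h)).mul continuous_const)

lemma exists_natResp_bound (x0 : Fin n → ℝ) (htf : 0 ≤ tf) : ∃ Kd : ℝ, 0 ≤ Kd ∧
    ∀ s ∈ Set.Icc (0:ℝ) tf, ‖natResp A C x0 (tf - s)‖ ≤ Kd := by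
  obtain ⟨Kd, hKd⟩ := (isCompact_Icc (a := (0:ℝ)) (b := tf)).exists_bound_of_continuousOn
    (natResp_reflected_cont (x0 := x0)).continuousOn
  exact ⟨Kd, le_trans (norm_nonneg _) (hKd 0 ⟨le_refl 0, htf⟩), hKd⟩

lemma ae_bound_of_memLinf {u : ℝ → Fin m → ℝ} (hu : MemLinf tf u) :
    ∀ᵐ t ∂(volume.restrict (Set.Ioc 0 tf)),
      ‖u t‖ ≤ (eLpNorm u ⊤ (volume.restrict (Set.Ioc 0 tf))).toReal := by
  have h := ae_le_eLpNormEssSup (f := u) (μ := volume.restrict (Set.Ioc 0 tf))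
  filter_upwards [h] with t ht
  have hne : eLpNormEssSup u (volume.restrict (Set.Ioc 0 tf)) ≠ ⊤ := by
    rw [← eLpNorm_exponent_top]
    exact hu.2.ne
  have := ENNReal.toReal_mono hne ht
  simpa [eLpNorm_exponent_top] using this

lemma eLpNormTop_le_of_bound {f : ℝ → Fin m → ℝ} {K : ℝ} (hK : 0 ≤ K)
    (hbd : ∀ᵐ t ∂μ, ‖f t‖ ≤ K) : eLpNorm f ⊤ μ ≤ ENNReal.ofReal K := by
  rw [eLpNorm_exponent_top, eLpNormEssSup]
  refine essSup_le_of_ae_le _ ?_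
  filter_upwards [hbd] with t ht
  rw [← ofReal_norm]
  exact ENNReal.ofReal_le_ofReal ht
end Helpers

section TOpLemmas
variable {n m : ℕ} {A : Matrix (Fin n) (Fin n) ℝ} {B : Matrix (Fin n) (Fin m) ℝ}
  {C : Matrix (Fin m) (Fin n) ℝ} {Sg Q R : Matrix (Fin m) (Fin m) ℝ}
  {x0 : Fin n → ℝ} {tf : ℝ}

noncomputable def gfun (A : Matrix (Fin n) (Fin n) ℝ) (B : Matrix (Fin n) (Fin m) ℝ)
    (C : Matrix (Fin m) (Fin n) ℝ) (Sg Q : Matrix (Fin m) (Fin m) ℝ)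
    (x0 : Fin n → ℝ) (tf : ℝ) (u : ℝ → Fin m → ℝ) (s : ℝ) : Fin m → ℝ :=
  Sg.mulVec (Q.mulVec (Gop A B C 0 u (tf - s) + natResp A C x0 (tf - s)))

lemma TOp_eq (u : ℝ → Fin m → ℝ) (t : ℝ) :
    TOp A B C 0 Sg Q R x0 tf u t
      = -(R⁻¹.mulVec (Sg.mulVec (Gop A B C 0 (gfun A B C Sg Q x0 tf u) (tf - t)))) := rfl

lemma gfun_aesm (htf : 0 < tf) {u : ℝ → Fin m → ℝ}
    (hu : AEStronglyMeasurable u (volume.restrict (Set.Ioc 0 tf))) :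
    AEStronglyMeasurable (gfun A B C Sg Q x0 tf u) (volume.restrict (Set.Ioc 0 tf)) :=
  aesm_mulVec (aesm_mulVec ((Gop_reflected_aesm htf hu).add
    natResp_reflected_cont.aestronglyMeasurable))

lemma gfun_bound (htf : 0 < tf) (hSg : IsSignature Sg)
    (hfin : ∀ i j, IntegrableOn (fun t => |(C * mexp A t * B) i j|) (Set.Ioi 0))
    {u : ℝ → Fin m → ℝ} (hu : MemLinf tf u) :
    ∃ Kg : ℝ, 0 ≤ Kg ∧ ∀ s ∈ Set.Icc (0:ℝ) tf, ‖gfun A B C Sg Q x0 tf u s‖ ≤ Kg := by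
  set μ' := volume.restrict (Set.Ioc (0:ℝ) tf)
  set Ku := (eLpNorm u ⊤ μ').toReal with hKu
  have hKu0 : 0 ≤ Ku := ENNReal.toReal_nonneg
  have hbu : ∀ᵐ t ∂μ', ‖u t‖ ≤ Ku := ae_bound_of_memLinf hu
  obtain ⟨Kd, hKd0, hKd⟩ := exists_natResp_bound (A := A) (C := C) x0 htf.le
  set Kg := rowSumNorm Q * (pkGain A B C * Ku + Kd) with hKgdef
  have hKg0 : 0 ≤ Kg :=
    mul_nonneg (rowSumNorm_nonneg Q)
      (add_nonneg (mul_nonneg pkGain_nonneg hKu0) hKd0)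
  refine ⟨Kg, hKg0, fun s hs => ?_⟩
  have hTs : tf - s ∈ Set.Icc (0:ℝ) tf := ⟨by linarith [hs.2], by linarith [hs.1]⟩
  have h1 : ‖Gop A B C 0 u (tf - s) + natResp A C x0 (tf - s)‖
      ≤ pkGain A B C * Ku + Kd :=
    (norm_add_le _ _).trans
      (add_le_add (Gop_bound hKu0 hfin hu.1 hbu hTs) (hKd s hs))
  exact sig_mulVec_norm_le hSg hKg0
    (mulVec_norm_le (add_nonneg (mul_nonneg pkGain_nonneg hKu0) hKd0) h1)

lemma TOp_memLinf (htf : 0 < tf) (hSg : IsSignature Sg)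
    (hfin : ∀ i j, IntegrableOn (fun t => |(C * mexp A t * B) i j|) (Set.Ioi 0))
    {u : ℝ → Fin m → ℝ} (hu : MemLinf tf u) :
    MemLinf tf (TOp A B C 0 Sg Q R x0 tf u) := by
  set μ' := volume.restrict (Set.Ioc (0:ℝ) tf)
  obtain ⟨Kg, hKg0, hgb⟩ := gfun_bound (Q := Q) (x0 := x0) htf hSg hfin hu
  have hgaesm := gfun_aesm (A := A) (B := B) (C := C) (Sg := Sg) (Q := Q) (x0 := x0) htf hu.1
  have hgb' : ∀ᵐ s ∂μ', ‖gfun A B C Sg Q x0 tf u s‖ ≤ Kg :=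
    (ae_restrict_mem measurableSet_Ioc).mono fun s hs => hgb s ⟨hs.1.le, hs.2⟩
  have hTb : ∀ t ∈ Set.Icc (0:ℝ) tf, ‖TOp A B C 0 Sg Q R x0 tf u t‖
      ≤ rowSumNorm R⁻¹ * (pkGain A B C * Kg) := by
    intro t ht
    have hTt : tf - t ∈ Set.Icc (0:ℝ) tf := ⟨by linarith [ht.2], by linarith [ht.1]⟩
    rw [TOp_eq, norm_neg]
    refine mulVec_norm_le (mul_nonneg pkGain_nonneg hKg0) ?_
    refine sig_mulVec_norm_le hSg (mul_nonneg pkGain_nonneg hKg0) ?_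
    exact Gop_bound hKg0 hfin hgaesm hgb' hTt
  constructor
  · exact (aesm_mulVec (aesm_mulVec (Gop_reflected_aesm htf hgaesm))).neg
  · have hbd : ∀ᵐ t ∂μ', ‖TOp A B C 0 Sg Q R x0 tf u t‖
        ≤ rowSumNorm R⁻¹ * (pkGain A B C * Kg) :=
      (ae_restrict_mem measurableSet_Ioc).mono fun t ht => hTb t ⟨ht.1.le, ht.2⟩
    have h0 : (0:ℝ) ≤ rowSumNorm R⁻¹ * (pkGain A B C * Kg) :=
      mul_nonneg (rowSumNorm_nonneg R⁻¹) (mul_nonneg (pkGain_nonneg (A := A) (B := B) (C := C)) hKg0)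
    exact lt_of_le_of_lt (eLpNormTop_le_of_bound h0 hbd) ENNReal.ofReal_lt_top
end TOpLemmas

section Contract
variable {n m : ℕ} {A : Matrix (Fin n) (Fin n) ℝ} {B : Matrix (Fin n) (Fin m) ℝ}
  {C : Matrix (Fin m) (Fin n) ℝ} {Sg Q R : Matrix (Fin m) (Fin m) ℝ}
  {x0 : Fin n → ℝ} {tf : ℝ}

lemma TOp_contract (htf : 0 < tf) (hSg : IsSignature Sg)
    (hfin : ∀ i j, IntegrableOn (fun t => |(C * mexp A t * B) i j|) (Set.Ioi 0))
    {u v : ℝ → Fin m → ℝ} (hu : MemLinf tf u) (hv : MemLinf tf v) :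
    eLpNorm (fun t => TOp A B C 0 Sg Q R x0 tf u t - TOp A B C 0 Sg Q R x0 tf v t) ⊤
        (volume.restrict (Set.Ioc 0 tf))
      ≤ ENNReal.ofReal (rowSumNorm R⁻¹ * pkGain A B C ^ 2 * rowSumNorm Q)
        * eLpNorm (fun t => u t - v t) ⊤ (volume.restrict (Set.Ioc 0 tf)) := by
  set μ' := volume.restrict (Set.Ioc (0:ℝ) tf) with hμ'
  set w : ℝ → Fin m → ℝ := fun t => u t - v t with hw
  have hwm : AEStronglyMeasurable w μ' := hu.1.sub hv.1
  have hwfin : eLpNorm w ⊤ μ' < ⊤ :=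
    lt_of_le_of_lt (eLpNorm_sub_le hu.1 hv.1 le_top)
      (ENNReal.add_lt_top.mpr ⟨hu.2, hv.2⟩)
  set Kw := (eLpNorm w ⊤ μ').toReal with hKw
  have hKw0 : 0 ≤ Kw := ENNReal.toReal_nonneg
  have hbw : ∀ᵐ t ∂μ', ‖w t‖ ≤ Kw := ae_bound_of_memLinf ⟨hwm, hwfin⟩
  set Ku := (eLpNorm u ⊤ μ').toReal
  set Kv := (eLpNorm v ⊤ μ').toReal
  have hKu0 : 0 ≤ Ku := ENNReal.toReal_nonneg
  have hKv0 : 0 ≤ Kv := ENNReal.toReal_nonneg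
  have hbu : ∀ᵐ t ∂μ', ‖u t‖ ≤ Ku := ae_bound_of_memLinf hu
  have hbv : ∀ᵐ t ∂μ', ‖v t‖ ≤ Kv := ae_bound_of_memLinf hv
  -- difference of gfun
  have hδg : ∀ s ∈ Set.Icc (0:ℝ) tf, gfun A B C Sg Q x0 tf v s - gfun A B C Sg Q x0 tf u s
      = Sg.mulVec (Q.mulVec (Gop A B C 0 (fun τ => v τ - u τ) (tf - s))) := by
    intro s hs
    have hTs : tf - s ∈ Set.Icc (0:ℝ) tf := ⟨by linarith [hs.2], by linarith [hs.1]⟩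
    unfold gfun
    rw [← Matrix.mulVec_sub Sg, ← Matrix.mulVec_sub Q]
    rw [add_sub_add_comm, sub_self, add_zero,
      Gop_sub hKv0 hKu0 hv.1 hu.1 hbv hbu hTs]
  set L := rowSumNorm R⁻¹ * pkGain A B C ^ 2 * rowSumNorm Q with hL
  have hδb : ∀ s ∈ Set.Icc (0:ℝ) tf,
      ‖gfun A B C Sg Q x0 tf v s - gfun A B C Sg Q x0 tf u s‖
        ≤ rowSumNorm Q * (pkGain A B C * Kw) := by
    intro s hs
    have hTs : tf - s ∈ Set.Icc (0:ℝ) tf := ⟨by linarith [hs.2], by linarith [hs.1]⟩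
    rw [hδg s hs]
    have hvu : ∀ᵐ t ∂μ', ‖v t - u t‖ ≤ Kw := by
      filter_upwards [hbw] with t ht
      rw [norm_sub_rev]
      exact ht
    have hGb : ‖Gop A B C 0 (fun τ => v τ - u τ) (tf - s)‖ ≤ pkGain A B C * Kw :=
      Gop_bound hKw0 hfin (hv.1.sub hu.1) hvu hTs
    exact sig_mulVec_norm_le hSg
      (mul_nonneg (rowSumNorm_nonneg Q) (mul_nonneg pkGain_nonneg hKw0))
      (mulVec_norm_le (mul_nonneg pkGain_nonneg hKw0) hGb)
  -- pointwise bound on the difference of TOp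
  have hptw : ∀ t ∈ Set.Icc (0:ℝ) tf,
      ‖TOp A B C 0 Sg Q R x0 tf u t - TOp A B C 0 Sg Q R x0 tf v t‖ ≤ L * Kw := by
    intro t ht
    have hTt : tf - t ∈ Set.Icc (0:ℝ) tf := ⟨by linarith [ht.2], by linarith [ht.1]⟩
    obtain ⟨Kgu, hKgu0, hgbu⟩ := gfun_bound (Q := Q) (x0 := x0) htf hSg hfin hu
    obtain ⟨Kgv, hKgv0, hgbv⟩ := gfun_bound (Q := Q) (x0 := x0) htf hSg hfin hv
    have hgaesmu := gfun_aesm (A := A) (B := B) (C := C) (Sg := Sg) (Q := Q) (x0 := x0) htf hu.1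
    have hgaesmv := gfun_aesm (A := A) (B := B) (C := C) (Sg := Sg) (Q := Q) (x0 := x0) htf hv.1
    have hgbu' : ∀ᵐ s ∂μ', ‖gfun A B C Sg Q x0 tf u s‖ ≤ Kgu :=
      (ae_restrict_mem measurableSet_Ioc).mono fun s hs => hgbu s ⟨hs.1.le, hs.2⟩
    have hgbv' : ∀ᵐ s ∂μ', ‖gfun A B C Sg Q x0 tf v s‖ ≤ Kgv :=
      (ae_restrict_mem measurableSet_Ioc).mono fun s hs => hgbv s ⟨hs.1.le, hs.2⟩
    have hdiff : TOp A B C 0 Sg Q R x0 tf u t - TOp A B C 0 Sg Q R x0 tf v t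
        = R⁻¹.mulVec (Sg.mulVec (Gop A B C 0
            (fun s => gfun A B C Sg Q x0 tf v s - gfun A B C Sg Q x0 tf u s) (tf - t))) := by
      rw [TOp_eq, TOp_eq, neg_sub_neg, ← Matrix.mulVec_sub R⁻¹, ← Matrix.mulVec_sub Sg]
      rw [Gop_sub hKgv0 hKgu0 hgaesmv hgaesmu hgbv' hgbu' hTt]
    rw [hdiff]
    have hδaesm : AEStronglyMeasurable
        (fun s => gfun A B C Sg Q x0 tf v s - gfun A B C Sg Q x0 tf u s) μ' :=
      hgaesmv.sub hgaesmu
    have hδb' : ∀ᵐ s ∂μ',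
        ‖gfun A B C Sg Q x0 tf v s - gfun A B C Sg Q x0 tf u s‖
          ≤ rowSumNorm Q * (pkGain A B C * Kw) :=
      (ae_restrict_mem measurableSet_Ioc).mono fun s hs => hδb s ⟨hs.1.le, hs.2⟩
    have hGb2 : ‖Gop A B C 0
        (fun s => gfun A B C Sg Q x0 tf v s - gfun A B C Sg Q x0 tf u s) (tf - t)‖
          ≤ pkGain A B C * (rowSumNorm Q * (pkGain A B C * Kw)) :=
      Gop_bound (mul_nonneg (rowSumNorm_nonneg Q) (mul_nonneg pkGain_nonneg hKw0))
        hfin hδaesm hδb' hTt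
    have hfinal : ‖R⁻¹.mulVec (Sg.mulVec (Gop A B C 0
        (fun s => gfun A B C Sg Q x0 tf v s - gfun A B C Sg Q x0 tf u s) (tf - t)))‖
          ≤ rowSumNorm R⁻¹ * (pkGain A B C * (rowSumNorm Q * (pkGain A B C * Kw))) := by
      refine mulVec_norm_le ?_ ?_
      · exact mul_nonneg pkGain_nonneg (mul_nonneg (rowSumNorm_nonneg Q)
          (mul_nonneg pkGain_nonneg hKw0))
      · exact sig_mulVec_norm_le hSg (mul_nonneg pkGain_nonneg
          (mul_nonneg (rowSumNorm_nonneg Q) (mul_nonneg pkGain_nonneg hKw0))) hGb2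
    refine hfinal.trans_eq ?_
    rw [hL]; ring
  have hL0 : 0 ≤ L := by
    rw [hL]
    exact mul_nonneg (mul_nonneg (rowSumNorm_nonneg _) (pow_nonneg pkGain_nonneg 2))
      (rowSumNorm_nonneg _)
  have h1 : eLpNorm (fun t => TOp A B C 0 Sg Q R x0 tf u t - TOp A B C 0 Sg Q R x0 tf v t)
      ⊤ μ' ≤ ENNReal.ofReal (L * Kw) :=
    eLpNormTop_le_of_bound (mul_nonneg hL0 hKw0)
      ((ae_restrict_mem measurableSet_Ioc).mono fun t ht => hptw t ⟨ht.1.le, ht.2⟩)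
  refine h1.trans ?_
  rw [ENNReal.ofReal_mul hL0, hKw, ENNReal.ofReal_toReal hwfin.ne]
end Contract

section MainAux
variable {n m : ℕ} {A : Matrix (Fin n) (Fin n) ℝ} {B : Matrix (Fin n) (Fin m) ℝ}
  {C : Matrix (Fin m) (Fin n) ℝ} {Sg Q R : Matrix (Fin m) (Fin m) ℝ}
  {x0 : Fin n → ℝ} {tf : ℝ}

lemma memLinf_smul_add {f g : ℝ → Fin m → ℝ} (hf : MemLinf tf f) (hg : MemLinf tf g)
    (a b : ℝ) : MemLinf tf (fun t => a • f t + b • g t) := by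
  set μ' := volume.restrict (Set.Ioc (0:ℝ) tf)
  have hm1 : AEStronglyMeasurable (fun t => a • f t) μ' := hf.1.const_smul a
  have hm2 : AEStronglyMeasurable (fun t => b • g t) μ' := hg.1.const_smul b
  constructor
  · exact hm1.add hm2
  · have hsum : eLpNorm (fun t => a • f t + b • g t) ⊤ μ'
        ≤ eLpNorm (fun t => a • f t) ⊤ μ' + eLpNorm (fun t => b • g t) ⊤ μ' :=
      eLpNorm_add_le hm1 hm2 le_top
    refine lt_of_le_of_lt hsum ?_
    have e1 : eLpNorm (fun t => a • f t) ⊤ μ' = ‖a‖₊ * eLpNorm f ⊤ μ' :=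
      eLpNorm_const_smul a f ⊤ μ'
    have e2 : eLpNorm (fun t => b • g t) ⊤ μ' = ‖b‖₊ * eLpNorm g ⊤ μ' :=
      eLpNorm_const_smul b g ⊤ μ'
    rw [e1, e2]
    exact ENNReal.add_lt_top.mpr
      ⟨ENNReal.mul_lt_top ENNReal.coe_lt_top hf.2,
       ENNReal.mul_lt_top ENNReal.coe_lt_top hg.2⟩

set_option maxHeartbeats 1000000 in
lemma TOp_step_est (htf : 0 < tf) (hSg : IsSignature Sg)
    (hfin : ∀ i j, IntegrableOn (fun t => |(C * mexp A t * B) i j|) (Set.Ioi 0))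
    (α L : ℝ) (hα0 : 0 < α) (hα1 : α ≤ 1) (hL0 : 0 ≤ L)
    (hLdef : L = rowSumNorm R⁻¹ * pkGain A B C ^ 2 * rowSumNorm Q)
    (uk ustar : ℝ → Fin m → ℝ) (huk : MemLinf tf uk) (hustar : MemLinf tf ustar)
    (ukk : ℝ → Fin m → ℝ)
    (hrec : ∀ t, ukk t = (1 - α) • uk t + α • TOp A B C 0 Sg Q R x0 tf uk t)
    (hfix : ustar = TOp A B C 0 Sg Q R x0 tf ustar) :
    eLpNorm (fun t => ukk t - ustar t) ⊤ (volume.restrict (Set.Ioc 0 tf))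
      ≤ ENNReal.ofReal (1 - α + α * L)
        * eLpNorm (fun t => uk t - ustar t) ⊤ (volume.restrict (Set.Ioc 0 tf)) := by
  set μ' := volume.restrict (Set.Ioc (0:ℝ) tf) with hμ'
  have hT := TOp_memLinf (Q := Q) (R := R) (x0 := x0) htf hSg hfin huk
  have hTstar := TOp_memLinf (Q := Q) (R := R) (x0 := x0) htf hSg hfin hustar
  have hdecomp : (fun t => ukk t - ustar t)
      = (fun t => (1 - α) • (uk t - ustar t))
        + (fun t => α • (TOp A B C 0 Sg Q R x0 tf uk t
            - TOp A B C 0 Sg Q R x0 tf ustar t)) := by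
    funext t
    simp only [Pi.add_apply]
    rw [hrec t, ← congrFun hfix t]
    module
  have h1m : AEStronglyMeasurable (fun t => uk t - ustar t) μ' := huk.1.sub hustar.1
  have h2m : AEStronglyMeasurable (fun t => TOp A B C 0 Sg Q R x0 tf uk t
      - TOp A B C 0 Sg Q R x0 tf ustar t) μ' := hT.1.sub hTstar.1
  have f1m : AEStronglyMeasurable (fun t => (1 - α) • (uk t - ustar t)) μ' :=
    h1m.const_smul (1 - α)
  have f2m : AEStronglyMeasurable (fun t => α • (TOp A B C 0 Sg Q R x0 tf uk t
      - TOp A B C 0 Sg Q R x0 tf ustar t)) μ' := h2m.const_smul α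
  have s1 : eLpNorm (fun t => ukk t - ustar t) ⊤ μ'
      ≤ eLpNorm (fun t => (1 - α) • (uk t - ustar t)) ⊤ μ'
        + eLpNorm (fun t => α • (TOp A B C 0 Sg Q R x0 tf uk t
            - TOp A B C 0 Sg Q R x0 tf ustar t)) ⊤ μ' := by
    rw [hdecomp]
    exact eLpNorm_add_le f1m f2m le_top
  have e1 : eLpNorm (fun t => (1 - α) • (uk t - ustar t)) ⊤ μ'
      = ENNReal.ofReal (1 - α) * eLpNorm (fun t => uk t - ustar t) ⊤ μ' := by
    rw [show (fun t => (1 - α) • (uk t - ustar t))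
        = (1 - α) • (fun t => uk t - ustar t) from rfl]
    rw [eLpNorm_const_smul, Real.enorm_eq_ofReal (by linarith)]
  have e2 : eLpNorm (fun t => α • (TOp A B C 0 Sg Q R x0 tf uk t
      - TOp A B C 0 Sg Q R x0 tf ustar t)) ⊤ μ'
      = ENNReal.ofReal α * eLpNorm (fun t => TOp A B C 0 Sg Q R x0 tf uk t
          - TOp A B C 0 Sg Q R x0 tf ustar t) ⊤ μ' := by
    rw [show (fun t => α • (TOp A B C 0 Sg Q R x0 tf uk t
        - TOp A B C 0 Sg Q R x0 tf ustar t))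
        = α • (fun t => TOp A B C 0 Sg Q R x0 tf uk t
            - TOp A B C 0 Sg Q R x0 tf ustar t) from rfl]
    rw [eLpNorm_const_smul, Real.enorm_eq_ofReal hα0.le]
  have hcontr := TOp_contract (Q := Q) (R := R) (x0 := x0) htf hSg hfin huk hustar
  calc eLpNorm (fun t => ukk t - ustar t) ⊤ μ'
      ≤ ENNReal.ofReal (1 - α) * eLpNorm (fun t => uk t - ustar t) ⊤ μ'
        + ENNReal.ofReal α * eLpNorm (fun t => TOp A B C 0 Sg Q R x0 tf uk t
            - TOp A B C 0 Sg Q R x0 tf ustar t) ⊤ μ' := by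
        rw [← e1, ← e2]; exact s1
    _ ≤ ENNReal.ofReal (1 - α) * eLpNorm (fun t => uk t - ustar t) ⊤ μ'
        + ENNReal.ofReal α * (ENNReal.ofReal L
            * eLpNorm (fun t => uk t - ustar t) ⊤ μ') := by
        refine add_le_add le_rfl (mul_le_mul_right ?_ _)
        rw [hLdef]
        exact hcontr
    _ = ENNReal.ofReal (1 - α + α * L) * eLpNorm (fun t => uk t - ustar t) ⊤ μ' := by
        rw [← mul_assoc, ← ENNReal.ofReal_mul hα0.le, ← add_mul,
          ← ENNReal.ofReal_add (by linarith) (by positivity)]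
end MainAux

/-- under the small-gain condition ‖Q‖_∞‖G‖²_pk‖R⁻¹‖_∞ < 1 (with D = 0
and an externally symmetric system), the iteration u_{k+1} = (1−α)u_k + α𝒯(u_k)
satisfies ‖u_k − u*‖_{∞,t_f} ≤ (1 − α + α‖R⁻¹‖_∞‖G‖²_pk‖Q‖_∞)^k ‖u_0 − u*‖_{∞,t_f}
and converges to the fixed point u* of 𝒯 in L^m_∞(0,t_f). -/
theorem iteration_converges_Linf {n m : ℕ} (tf : ℝ) (htf : 0 < tf)
    (A : Matrix (Fin n) (Fin n) ℝ) (B : Matrix (Fin n) (Fin m) ℝ)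
    (C : Matrix (Fin m) (Fin n) ℝ) (x0 : Fin n → ℝ)
    (Sg Q R : Matrix (Fin m) (Fin m) ℝ)
    (hSg : IsSignature Sg) (hsym : ExtSym A B C 0 Sg)
    (hQ : Q.PosSemidef) (hR : R.PosDef)
    (hfin : ∀ i j, IntegrableOn (fun t => |(C * mexp A t * B) i j|) (Set.Ioi 0))
    (hsmall : rowSumNorm Q * pkGain A B C ^ 2 * rowSumNorm R⁻¹ < 1)
    (ustar : ℝ → Fin m → ℝ) (hustar : MemLinf tf ustar)
    (hfix : ustar = TOp A B C 0 Sg Q R x0 tf ustar)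
    (α : ℝ) (hα : α ∈ Set.Ioc (0:ℝ) 1)
    (u0 : ℝ → Fin m → ℝ) (hu0 : MemLinf tf u0)
    (useq : ℕ → ℝ → Fin m → ℝ) (hinit : useq 0 = u0)
    (hrec : ∀ k t, useq (k + 1) t
      = (1 - α) • useq k t + α • TOp A B C 0 Sg Q R x0 tf (useq k) t) :
    (∀ k : ℕ, eLpNorm (fun t => useq k t - ustar t) ⊤ (volume.restrict (Set.Ioc 0 tf))
        ≤ ENNReal.ofReal ((1 - α + α * rowSumNorm R⁻¹ * pkGain A B C ^ 2 * rowSumNorm Q) ^ k)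
            * eLpNorm (fun t => u0 t - ustar t) ⊤ (volume.restrict (Set.Ioc 0 tf))) ∧
      Filter.Tendsto
        (fun k => eLpNorm (fun t => useq k t - ustar t) ⊤ (volume.restrict (Set.Ioc 0 tf)))
        Filter.atTop (nhds 0) := by
  obtain ⟨hα0, hα1⟩ := hα
  set μ' := volume.restrict (Set.Ioc (0:ℝ) tf) with hμ'
  set L := rowSumNorm R⁻¹ * pkGain A B C ^ 2 * rowSumNorm Q with hLdef
  have hL0 : 0 ≤ L := mul_nonneg (mul_nonneg (rowSumNorm_nonneg _)
    (pow_nonneg pkGain_nonneg 2)) (rowSumNorm_nonneg _)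
  have hL1 : L < 1 := by
    have hLe : L = rowSumNorm Q * pkGain A B C ^ 2 * rowSumNorm R⁻¹ := by
      rw [hLdef]; ring
    rw [hLe]; exact hsmall
  have hc0 : 0 ≤ 1 - α + α * L := by nlinarith
  have hc1 : 1 - α + α * L < 1 := by nlinarith
  have hceq : 1 - α + α * rowSumNorm R⁻¹ * pkGain A B C ^ 2 * rowSumNorm Q
      = 1 - α + α * L := by rw [hLdef]; ring
  have hseq : ∀ k, MemLinf tf (useq k) := by
    intro k
    induction k with
    | zero => rw [hinit]; exact hu0
    | succ k ih =>
      have heq : useq (k + 1)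
          = fun t => (1 - α) • useq k t + α • TOp A B C 0 Sg Q R x0 tf (useq k) t :=
        funext fun t => hrec k t
      rw [heq]
      exact memLinf_smul_add ih
        (TOp_memLinf (Q := Q) (R := R) (x0 := x0) htf hSg hfin ih) _ _
  have hstep : ∀ k, eLpNorm (fun t => useq (k + 1) t - ustar t) ⊤ μ'
      ≤ ENNReal.ofReal (1 - α + α * L)
        * eLpNorm (fun t => useq k t - ustar t) ⊤ μ' := fun k =>
    TOp_step_est htf hSg hfin α L hα0 hα1 hL0 hLdef (useq k) ustar (hseq k) hustar
      (useq (k + 1)) (hrec k) hfix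
  have hbound : ∀ k, eLpNorm (fun t => useq k t - ustar t) ⊤ μ'
      ≤ ENNReal.ofReal ((1 - α + α * L) ^ k)
        * eLpNorm (fun t => u0 t - ustar t) ⊤ μ' := by
    intro k
    induction k with
    | zero => simp [hinit]
    | succ k ih =>
      calc eLpNorm (fun t => useq (k + 1) t - ustar t) ⊤ μ'
          ≤ ENNReal.ofReal (1 - α + α * L)
            * eLpNorm (fun t => useq k t - ustar t) ⊤ μ' := hstep k
        _ ≤ ENNReal.ofReal (1 - α + α * L) * (ENNReal.ofReal ((1 - α + α * L) ^ k)
            * eLpNorm (fun t => u0 t - ustar t) ⊤ μ') := mul_le_mul_right ih _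
        _ = ENNReal.ofReal ((1 - α + α * L) ^ (k + 1))
            * eLpNorm (fun t => u0 t - ustar t) ⊤ μ' := by
            rw [← mul_assoc, ← ENNReal.ofReal_mul hc0, ← pow_succ']
  have he0 : eLpNorm (fun t => u0 t - ustar t) ⊤ μ' ≠ ⊤ :=
    (lt_of_le_of_lt (eLpNorm_sub_le hu0.1 hustar.1 le_top)
      (ENNReal.add_lt_top.mpr ⟨hu0.2, hustar.2⟩)).ne
  constructor
  · intro k
    rw [hceq]
    exact hbound k
  · have h1 : Tendsto (fun k : ℕ => (1 - α + α * L) ^ k) atTop (nhds 0) :=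
      tendsto_pow_atTop_nhds_zero_of_lt_one hc0 hc1
    have h2 : Tendsto (fun k : ℕ => ENNReal.ofReal ((1 - α + α * L) ^ k)) atTop (nhds 0) := by
      have := (ENNReal.continuous_ofReal.tendsto 0).comp h1
      simpa [Function.comp_def] using this
    have hupper : Tendsto (fun k : ℕ => ENNReal.ofReal ((1 - α + α * L) ^ k)
        * eLpNorm (fun t => u0 t - ustar t) ⊤ μ') atTop (nhds 0) := by
      have := ENNReal.Tendsto.mul_const h2 (Or.inr he0)
      simpa using this
    exact tendsto_of_tendsto_of_tendsto_of_le_of_le tendsto_const_nhds hupper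
      (fun k => zero_le) (fun k => hbound k)
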